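/- Every core-compact well-filtered T0 space is sober. -/

import Mathlib

open Set

def RelCpt {X : Type*} [TopologicalSpace X] (A B : Set X) : Prop :=
  A ⊆ B ∧ ∀ 𝒰 : Set (Set X), (∀ U ∈ 𝒰, IsOpen U) → B ⊆ ⋃₀ 𝒰 →
    ∃ 𝒱 ⊆ 𝒰, 𝒱.Finite ∧ A ⊆ ⋃₀ 𝒱

def Saturated {X : Type*} [TopologicalSpace X] (A : Set X) : Prop :=
  A = ⋂₀ {U : Set X | IsOpen U ∧ A ⊆ U}

def WellFiltered (X : Type*) [TopologicalSpace X] : Prop :=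
  ∀ 𝒦 : Set (Set X), 𝒦.Nonempty →
    (∀ K ∈ 𝒦, IsCompact K ∧ Saturated K) →
    (∀ K₁ ∈ 𝒦, ∀ K₂ ∈ 𝒦, ∃ K₃ ∈ 𝒦, K₃ ⊆ K₁ ∧ K₃ ⊆ K₂) →
    ∀ U : Set X, IsOpen U → ⋂₀ 𝒦 ⊆ U → ∃ K ∈ 𝒦, K ⊆ U

def OmegaWellFiltered (X : Type*) [TopologicalSpace X] : Prop :=
  ∀ K : ℕ → Set X, (∀ n, IsCompact (K n) ∧ Saturated (K n)) →
    (∀ m n : ℕ, ∃ k, K k ⊆ K m ∧ K k ⊆ K n) →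
    ∀ U : Set X, IsOpen U → (⋂ n, K n) ⊆ U → ∃ n, K n ⊆ U

def SatWellFiltered (X : Type*) [TopologicalSpace X] : Prop :=
  ∀ 𝒜 : Set (Set X), 𝒜.Nonempty →
    (∀ A ∈ 𝒜, Saturated A) →
    (∀ A₁ ∈ 𝒜, ∀ A₂ ∈ 𝒜, ∃ A₃ ∈ 𝒜, RelCpt A₃ A₁ ∧ RelCpt A₃ A₂) →
    ∀ U : Set X, IsOpen U → ⋂₀ 𝒜 ⊆ U → ∃ A ∈ 𝒜, A ⊆ U

def SatOmegaWellFiltered (X : Type*) [TopologicalSpace X] : Prop :=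
  ∀ A : ℕ → Set X, (∀ n, Saturated (A n)) →
    (∀ m n : ℕ, ∃ k, RelCpt (A k) (A m) ∧ RelCpt (A k) (A n)) →
    ∀ U : Set X, IsOpen U → (⋂ n, A n) ⊆ U → ∃ n, A n ⊆ U

def OpenWellFiltered (X : Type*) [TopologicalSpace X] : Prop :=
  ∀ 𝒜 : Set (Set X), 𝒜.Nonempty →
    (∀ A ∈ 𝒜, IsOpen A) →
    (∀ A₁ ∈ 𝒜, ∀ A₂ ∈ 𝒜, ∃ A₃ ∈ 𝒜, RelCpt A₃ A₁ ∧ RelCpt A₃ A₂) →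
    ∀ U : Set X, IsOpen U → ⋂₀ 𝒜 ⊆ U → ∃ A ∈ 𝒜, A ⊆ U

def OpenOmegaWellFiltered (X : Type*) [TopologicalSpace X] : Prop :=
  ∀ A : ℕ → Set X, (∀ n, IsOpen (A n)) →
    (∀ m n : ℕ, ∃ k, RelCpt (A k) (A m) ∧ RelCpt (A k) (A n)) →
    ∀ U : Set X, IsOpen U → (⋂ n, A n) ⊆ U → ∃ n, A n ⊆ U

def CoreCompact (X : Type*) [TopologicalSpace X] : Prop :=
  ∀ (x : X) (U : Set X), IsOpen U → x ∈ U → ∃ V : Set X, IsOpen V ∧ x ∈ V ∧ RelCpt V U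

def Sober (X : Type*) [TopologicalSpace X] : Prop :=
  ∀ F : Set X, IsClosed F → F.Nonempty →
    (∀ F₁ F₂ : Set X, IsClosed F₁ → IsClosed F₂ → F ⊆ F₁ ∪ F₂ → F ⊆ F₁ ∨ F ⊆ F₂) →
    ∃! x : X, F = closure {x}

/-!
Interpolating `V ≪ U` gives open sets `U = W₀ ≫ W₁ ≫ ⋯ ≫ V`, and well-filteredness makes
`⋂ Wₙ` compact, so the space is locally compact. The key step is that `⋂ Wₙ ⊆ O` forces some
`Wₙ ⊆ O`: otherwise take, by Zorn, a maximal open `M ⊇ O` containing no `Wₙ`, and points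
`xₙ ∈ Wₙ \ M`. Maximality makes `(xₙ)` converge to every point outside `M`, so its tails are
compact; their saturations form a filtered family of compact saturated sets whose intersection
lies in `M`, contradicting well-filteredness.

For an irreducible closed `F`, the compact saturated sets whose interior meets `F` form a
filtered family; well-filteredness yields a point of `F` in their intersection, and this point
is generic for `F`.
-/

open Filter Topology

section

variable {X : Type*} [TopologicalSpace X]

def saturation (s : Set X) : Set X := ⋂₀ {U | IsOpen U ∧ s ⊆ U}

lemma subset_saturation (s : Set X) : s ⊆ saturation s := fun _ hx _ hU => hU.2 hx

lemma saturation_subset {s U : Set X} (hU : IsOpen U) (h : s ⊆ U) : saturation s ⊆ U :=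
  sInter_subset_of_mem ⟨hU, h⟩

lemma saturated_saturation (s : Set X) : Saturated (saturation s) :=
  (subset_sInter fun _ hU => hU.2).antisymm
    (subset_sInter fun _ hU => sInter_subset_of_mem ⟨hU.1, saturation_subset hU.1 hU.2⟩)

lemma saturation_mono {s t : Set X} (h : s ⊆ t) : saturation s ⊆ saturation t :=
  fun _ hx U hU => hx U ⟨hU.1, h.trans hU.2⟩

lemma IsCompact.saturation {s : Set X} (hs : IsCompact s) : IsCompact (saturation s) := by
  refine isCompact_of_finite_subcover fun U hU hcover => ?_
  obtain ⟨t, ht⟩ := hs.elim_finite_subcover U hU ((subset_saturation s).trans hcover)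
  exact ⟨t, saturation_subset (isOpen_biUnion fun i _ => hU i) ht⟩

namespace RelCpt

variable {A A' B B' : Set X}

lemma mono_left (h : RelCpt A B) (hA : A' ⊆ A) : RelCpt A' B :=
  ⟨hA.trans h.1, fun 𝒰 h𝒰 hB =>
    let ⟨𝒱, h𝒱𝒰, h𝒱, hA𝒱⟩ := h.2 𝒰 h𝒰 hB
    ⟨𝒱, h𝒱𝒰, h𝒱, hA.trans hA𝒱⟩⟩

lemma mono_right (h : RelCpt A B) (hB : B ⊆ B') : RelCpt A B' :=
  ⟨h.1.trans hB, fun 𝒰 h𝒰 hB' => h.2 𝒰 h𝒰 (hB.trans hB')⟩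

lemma biUnion {ι : Type*} {t : Finset ι} {A : ι → Set X} (h : ∀ i ∈ t, RelCpt (A i) B) :
    RelCpt (⋃ i ∈ t, A i) B := by
  refine ⟨iUnion₂_subset fun i hi => (h i hi).1, fun 𝒰 h𝒰 hB => ?_⟩
  choose! 𝒱 h𝒱𝒰 h𝒱 hA𝒱 using fun i hi => (h i hi).2 𝒰 h𝒰 hB
  refine ⟨⋃ i ∈ t, 𝒱 i, iUnion₂_subset h𝒱𝒰, t.finite_toSet.biUnion h𝒱, ?_⟩
  exact iUnion₂_subset fun i hi =>
    (hA𝒱 i hi).trans (sUnion_mono (subset_iUnion₂ (s := fun i _ => 𝒱 i) i hi))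

lemma elim_finite_subcover (h : RelCpt A B) {ι : Type*} {U : ι → Set X}
    (hU : ∀ i, IsOpen (U i)) (hB : B ⊆ ⋃ i, U i) : ∃ t : Finset ι, A ⊆ ⋃ i ∈ t, U i := by
  obtain ⟨𝒱, h𝒱U, h𝒱, hA𝒱⟩ := h.2 (range U) (forall_mem_range.2 hU) (sUnion_range U ▸ hB)
  rw [← image_univ] at h𝒱U
  obtain ⟨t, -, ht, rfl⟩ := exists_subset_image_finite_and.1 ⟨𝒱, h𝒱U, h𝒱, rfl⟩
  exact ⟨ht.toFinset, by simpa [sUnion_image] using hA𝒱⟩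

lemma exists_subset_of_directed (h : RelCpt A B) {ι : Type*} [Nonempty ι] {U : ι → Set X}
    (hU : ∀ i, IsOpen (U i)) (hd : Directed (· ⊆ ·) U) (hB : B ⊆ ⋃ i, U i) : ∃ i, A ⊆ U i := by
  obtain ⟨t, ht⟩ := h.elim_finite_subcover hU hB
  obtain ⟨j, hj⟩ := hd.finset_le t
  exact ⟨j, ht.trans (iUnion₂_subset hj)⟩

end RelCpt

theorem CoreCompact.exists_relCpt_between (hcc : CoreCompact X) {V U : Set X} (hU : IsOpen U)
    (h : RelCpt V U) : ∃ W, IsOpen W ∧ RelCpt V W ∧ RelCpt W U := by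
  choose W hWo hyW hWU using fun y : U => hcc y U hU y.2
  choose W' hW'o hyW' hW'W using fun y : U => hcc y (W y) (hWo y) (hyW y)
  obtain ⟨t, ht⟩ := h.elim_finite_subcover hW'o fun y hy => mem_iUnion.2 ⟨⟨y, hy⟩, hyW' _⟩
  refine ⟨⋃ y ∈ t, W y, isOpen_biUnion fun y _ => hWo y, ?_, RelCpt.biUnion fun y _ => hWU y⟩
  exact (RelCpt.biUnion fun y hy => (hW'W y).mono_right
    (subset_iUnion₂ (s := fun y _ => W y) y hy)).mono_left ht

theorem CoreCompact.exists_relCpt_seq (hcc : CoreCompact X) {V U : Set X} (hU : IsOpen U)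
    (h : RelCpt V U) : ∃ W : ℕ → Set X, W 0 = U ∧
      ∀ n, IsOpen (W n) ∧ RelCpt V (W n) ∧ RelCpt (W (n + 1)) (W n) := by
  have step (W : {W : Set X // IsOpen W ∧ RelCpt V W}) :
      ∃ W' : {W : Set X // IsOpen W ∧ RelCpt V W}, RelCpt W'.1 W.1 := by
    obtain ⟨W', hW'o, hVW', hW'W⟩ := hcc.exists_relCpt_between W.2.1 W.2.2
    exact ⟨⟨W', hW'o, hVW'⟩, hW'W⟩
  choose f hf using step
  refine ⟨fun n => (f^[n] ⟨U, hU, h⟩).1, rfl, fun n => ⟨(f^[n] _).2.1, (f^[n] _).2.2, ?_⟩⟩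
  simp only [Function.iterate_succ_apply']
  exact hf _

theorem WellFiltered.exists_subset_of_antitone (hwf : WellFiltered X) {K : ℕ → Set X}
    (hK : ∀ n, IsCompact (K n) ∧ Saturated (K n)) (hanti : Antitone K) {U : Set X}
    (hU : IsOpen U) (hKU : ⋂ n, K n ⊆ U) : ∃ n, K n ⊆ U := by
  obtain ⟨_, ⟨n, rfl⟩, hn⟩ := hwf (range K) (range_nonempty K) (forall_mem_range.2 hK)
    (by
      rintro _ ⟨m, rfl⟩ _ ⟨n, rfl⟩
      exact ⟨K (max m n), mem_range_self _, hanti (le_max_left m n), hanti (le_max_right m n)⟩)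
    U hU (by rwa [sInter_range])
  exact ⟨n, hn⟩

theorem WellFiltered.exists_subset_of_iInter_subset (hwf : WellFiltered X) {W : ℕ → Set X}
    (hWo : ∀ n, IsOpen (W n)) (hW : ∀ n, RelCpt (W (n + 1)) (W n)) {O : Set X} (hO : IsOpen O)
    (hWO : ⋂ n, W n ⊆ O) : ∃ n, W n ⊆ O := by
  by_contra! hcon
  have hanti : Antitone W := antitone_nat_of_succ_le fun n => (hW n).1
  obtain ⟨M, hOM, hM⟩ := zorn_subset_nonempty {U | IsOpen U ∧ ∀ n, ¬ W n ⊆ U}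
    (fun c hcS hc ⟨U₀, hU₀⟩ => by
      refine ⟨⋃₀ c, ⟨isOpen_sUnion fun U hU => (hcS hU).1, fun n hn => ?_⟩,
        fun _ => subset_sUnion_of_mem⟩
      have : Nonempty c := ⟨⟨U₀, hU₀⟩⟩
      obtain ⟨⟨U, hUc⟩, hU⟩ := (hW n).exists_subset_of_directed (fun U => (hcS U.2).1)
        hc.directedOn.directed_val (sUnion_eq_iUnion ▸ hn)
      exact (hcS hUc).2 (n + 1) hU)
    O ⟨hO, hcon⟩
  have hmax {V : Set X} (hV : IsOpen V) (hVM : ¬ V ⊆ M) : ∃ n, W n ⊆ M ∪ V := by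
    by_contra! h
    exact hVM (subset_union_right.trans (hM.2 ⟨hM.1.1.union hV, h⟩ subset_union_left))
  choose x hxW hxM using fun n => not_subset.1 (hM.1.2 n)
  have hx {y : X} (hy : y ∉ M) : Tendsto x atTop (𝓝 y) := by
    refine tendsto_nhds.2 fun V hV hyV => ?_
    obtain ⟨m, hm⟩ := hmax hV fun h => hy (h hyV)
    exact eventually_atTop.2 ⟨m, fun k hk => (hm (hanti hk (hxW k))).resolve_left (hxM k)⟩
  have hmem (n : ℕ) : x n ∈ range fun k => x (k + n) := ⟨0, congrArg x (zero_add n)⟩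
  set T : ℕ → Set X := fun n => saturation (range fun k => x (k + n))
  have hT (n : ℕ) : IsCompact (T n) ∧ Saturated (T n) := by
    have := ((tendsto_add_atTop_iff_nat n).2 (hx (hxM n))).isCompact_insert_range
    rw [insert_eq_of_mem (hmem n)] at this
    exact ⟨this.saturation, saturated_saturation _⟩
  have hTanti : Antitone T := antitone_nat_of_succ_le fun n => saturation_mono <|
    range_subset_iff.2 fun k => ⟨k + 1, congrArg x (by omega)⟩
  have hTW (n : ℕ) : T n ⊆ W n := saturation_subset (hWo n) <|
    range_subset_iff.2 fun k => hanti (Nat.le_add_left n k) (hxW _)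
  obtain ⟨n, hn⟩ := hwf.exists_subset_of_antitone hT hTanti hM.1.1
    ((iInter_mono hTW).trans (hWO.trans hOM))
  exact hxM n (hn (subset_saturation _ (hmem n)))

theorem WellFiltered.isCompact_iInter (hwf : WellFiltered X) {W : ℕ → Set X}
    (hWo : ∀ n, IsOpen (W n)) (hW : ∀ n, RelCpt (W (n + 1)) (W n)) : IsCompact (⋂ n, W n) := by
  refine isCompact_of_finite_subcover fun U hU hcover => ?_
  obtain ⟨n, hn⟩ := hwf.exists_subset_of_iInter_subset hWo hW (isOpen_iUnion hU) hcover
  obtain ⟨t, ht⟩ := (hW n).elim_finite_subcover hU hn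
  exact ⟨t, (iInter_subset W (n + 1)).trans ht⟩

theorem CoreCompact.locallyCompactSpace (hcc : CoreCompact X) (hwf : WellFiltered X) :
    LocallyCompactSpace X := by
  refine ⟨fun x N hN => ?_⟩
  obtain ⟨U, hUN, hUo, hxU⟩ := mem_nhds_iff.1 hN
  obtain ⟨V, hVo, hxV, hVU⟩ := hcc x U hUo hxU
  obtain ⟨W, rfl, hW⟩ := hcc.exists_relCpt_seq hUo hVU
  refine ⟨⋂ n, W n, mem_of_superset (hVo.mem_nhds hxV) (subset_iInter fun n => (hW n).2.1.1),
    (iInter_subset W 0).trans hUN, ?_⟩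
  exact hwf.isCompact_iInter (fun n => (hW n).1) fun n => (hW n).2.2

theorem WellFiltered.quasiSober [LocallyCompactSpace X] (hwf : WellFiltered X) :
    QuasiSober X := by
  refine ⟨fun {S} hS hSc => ?_⟩
  let 𝒦 : Set (Set X) := {K | IsCompact K ∧ Saturated K ∧ (S ∩ interior K).Nonempty}
  have h𝒦 {U : Set X} (hU : IsOpen U) (hSU : (S ∩ U).Nonempty) : ∃ K ∈ 𝒦, K ⊆ U := by
    obtain ⟨z, hzS, hzU⟩ := hSU
    obtain ⟨L, hLz, hLU, hL⟩ := local_compact_nhds (hU.mem_nhds hzU)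
    exact ⟨saturation L, ⟨hL.saturation, saturated_saturation L, z, hzS,
      interior_mono (subset_saturation L) (mem_interior_iff_mem_nhds.2 hLz)⟩,
      saturation_subset hU hLU⟩
  have hdir : ∀ K₁ ∈ 𝒦, ∀ K₂ ∈ 𝒦, ∃ K₃ ∈ 𝒦, K₃ ⊆ K₁ ∧ K₃ ⊆ K₂ := by
    rintro K₁ ⟨-, -, h₁⟩ K₂ ⟨-, -, h₂⟩
    obtain ⟨K₃, hK₃, hK₃12⟩ := h𝒦 (isOpen_interior.inter isOpen_interior)
      (hS.2 _ _ isOpen_interior isOpen_interior h₁ h₂)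
    exact ⟨K₃, hK₃, hK₃12.trans (inter_subset_left.trans interior_subset),
      hK₃12.trans (inter_subset_right.trans interior_subset)⟩
  have hne : 𝒦.Nonempty :=
    let ⟨K, hK, _⟩ := h𝒦 isOpen_univ (by simpa using hS.1)
    ⟨K, hK⟩
  obtain ⟨x, hxS, hx𝒦⟩ : (S ∩ ⋂₀ 𝒦).Nonempty := by
    by_contra! h
    obtain ⟨K, ⟨-, -, z, hzS, hzK⟩, hKS⟩ := hwf 𝒦 hne (fun K hK => ⟨hK.1, hK.2.1⟩) hdir
      Sᶜ hSc.isOpen_compl fun y hy hyS => h.subset ⟨hyS, hy⟩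
    exact hKS (interior_subset hzK) hzS
  refine ⟨x, (closure_minimal (singleton_subset_iff.2 hxS) hSc).antisymm fun y hyS => ?_⟩
  by_contra hy
  obtain ⟨K, hK, hKx⟩ := h𝒦 isClosed_closure.isOpen_compl ⟨y, hyS, hy⟩
  exact hKx (hx𝒦 K hK) (subset_closure rfl)

end

/-- Every core-compact well-filtered space is sober. -/
theorem stmt11 (X : Type*) [TopologicalSpace X] [T0Space X]
    (hcc : CoreCompact X) (hwf : WellFiltered X) : Sober X := by
  have := hcc.locallyCompactSpace hwf
  have := hwf.quasiSober
  intro F hFc hFne hFirr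
  have hF : IsIrreducible F := ⟨hFne, isPreirreducible_iff_isClosed_union_isClosed.2 hFirr⟩
  obtain ⟨x, hx⟩ := QuasiSober.sober hF hFc
  exact ⟨x, hx.symm, fun y hy => IsGenericPoint.eq hy.symm hx⟩
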